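/- Let G = (V, E) be a multigraph and suppose k* is the smallest positive integer such that G is a k*-trail. Then the smallest positive integer k for which G contains a k-trail is either k* or k* − 1. -/

import Mathlib

/-- A multigraph on vertex type `V`: a finite multiset of unordered pairs of
vertices (loops and parallel edges allowed). -/
structure Multigraph (V : Type) where
  edges : Multiset (Sym2 V)

namespace Multigraph

open Classical in
/-- The degree of a vertex: number of edge-endpoints at `v`, a loop counting twice. -/
noncomputable def deg {V : Type} (G : Multigraph V) (v : V) : ℕ :=
  (G.edges.map fun e => if e = Sym2.diag v then 2 else if v ∈ e then 1 else 0).sum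

/-- Adjacency in a multigraph. -/
def Adj {V : Type} (G : Multigraph V) (u v : V) : Prop := s(u, v) ∈ G.edges

/-- A multigraph is connected if it has a vertex and any two vertices are joined by a walk. -/
def Connected {V : Type} (G : Multigraph V) : Prop :=
  Nonempty V ∧ ∀ u v : V, Relation.ReflTransGen G.Adj u v

open Classical in
/-- `G` is the homomorphic image of `H` by the onto function `φ`: for all `u v`,
the number of edges of `G` between `u` and `v` equals the number of edges of `H`
whose endpoints are mapped by `φ` to `{u, v}`. -/
def IsHomImage {V W : Type} (G : Multigraph V) (H : Multigraph W) (φ : W → V) : Prop :=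
  Function.Surjective φ ∧
    ∀ u v : V, G.edges.count s(u, v) = (H.edges.map (Sym2.map φ)).count s(u, v)

/-- A tree: a connected multigraph with `|F| = |W| - 1`. -/
def IsTree {W : Type} (H : Multigraph W) : Prop :=
  Connected H ∧ Multiset.card H.edges + 1 = Nat.card W

/-- A multigraph is a `k`-trail if it is the homomorphic image of a (finite)
connected multigraph of maximum degree at most `k`. -/
def IsKTrail {V : Type} (G : Multigraph V) (k : ℕ) : Prop :=
  ∃ (W : Type) (_ : Finite W) (H : Multigraph W) (φ : W → V),
    Connected H ∧ (∀ w, H.deg w ≤ k) ∧ IsHomImage G H φ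

/-- `G` contains a `k`-trail if some submultiset `U` of its edges gives a `k`-trail `(V, U)`. -/
def ContainsKTrail {V : Type} (G : Multigraph V) (k : ℕ) : Prop :=
  ∃ U : Multiset (Sym2 V), U ≤ G.edges ∧ IsKTrail (Multigraph.mk U) k

/-- `lam` is a feasible multiplicity vector for `G`. -/
def FeasibleMult {V : Type} (G : Multigraph V) (lam : V → ℕ) : Prop :=
  ∃ (W : Type) (_ : Finite W) (H : Multigraph W) (φ : W → V),
    Connected H ∧ IsHomImage G H φ ∧ ∀ v : V, Nat.card (φ ⁻¹' {v}) = lam v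

end Multigraph

open Multigraph

/-! If `G` contains a `j`-trail, presented by a connected `H` of maximum degree `j`, the remaining
edges `R` of `G` can be attached to `H` keeping the maximum degree at most `j + 1`; so `G` is a
`(j + 1)`-trail, and the least `k` with a `k`-trail inside `G` satisfies `k ≤ k* ≤ k + 1`.

For `j ≥ 2`, take a walk in `R` that cannot be extended at its start `z`, and hang it as a path
from a copy of `z` of degree at most `j`. The new copies have degree at most `2 ≤ j`, and `z`
carries no edge of `R` any more, so every vertex still incident to `R` keeps a copy of degree at
most `j`, and we repeat. For `j = 1`, `H` is a vertex or an edge, so `V` has at most two points;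
the edges of `R` are then hung one at a time as pendant edges at leaves, loops first. -/

open Function

namespace Multigraph

variable {V W : Type}

theorem adj_comm {G : Multigraph V} {u v : V} : G.Adj u v ↔ G.Adj v u := by
  rw [Adj, Adj, Sym2.eq_swap]

theorem connected_of_forall_reflTransGen {G : Multigraph V} (c : V)
    (h : ∀ u, Relation.ReflTransGen G.Adj u c) : G.Connected := by
  have : Std.Symm G.Adj := ⟨fun _ _ => adj_comm.mp⟩
  exact ⟨⟨c⟩, fun u v => (h u).trans (Std.Symm.symm _ _ (h v))⟩

theorem deg_eq_countP_add_count [DecidableEq V] (G : Multigraph V) (v : V) :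
    G.deg v = G.edges.countP (v ∈ ·) + G.edges.count s(v, v) := by
  rw [deg, Multiset.countP_eq_card_filter, Multiset.count_eq_card_filter_eq]
  induction G.edges using Multiset.induction_on with
  | empty => simp
  | cons e E ih =>
    simp only [Multiset.map_cons, Multiset.sum_cons, ih, Multiset.filter_cons]
    by_cases h : e = s(v, v)
    · subst h; simp [Sym2.diag]; omega
    · have : ¬ e = Sym2.diag v := h
      simp [this, Ne.symm h]
      split_ifs <;> simp; omega

theorem two_le_deg_of_adj_of_adj {G : Multigraph V} {x y z : V} (hy : G.Adj x y)
    (hz : G.Adj x z) (hyz : y ≠ z) : 2 ≤ G.deg x := by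
  classical
  have hsub : s(x, y) ::ₘ {s(x, z)} ≤ G.edges.filter (x ∈ ·) :=
    (Multiset.cons_le_of_notMem (by rwa [Multiset.mem_singleton, Sym2.congr_right])).mpr
      ⟨Multiset.mem_filter.mpr ⟨hy, Sym2.mem_mk_left x y⟩,
        Multiset.singleton_le.mpr (Multiset.mem_filter.mpr ⟨hz, Sym2.mem_mk_left x z⟩)⟩
  have := Multiset.card_le_card hsub
  rw [deg_eq_countP_add_count, Multiset.countP_eq_card_filter]
  simp only [Multiset.card_cons, Multiset.card_singleton] at this
  omega

theorem eq_or_eq_or_eq_of_deg_le_one {H : Multigraph W} (hc : H.Connected)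
    (hdeg : ∀ x, H.deg x ≤ 1) (a b c : W) : a = b ∨ a = c ∨ b = c := by
  have huniq : ∀ {x y z}, H.Adj x y → H.Adj x z → y = z := fun {x _ _} hy hz => by
    by_contra hyz
    have := hdeg x
    have := two_le_deg_of_adj_of_adj hy hz hyz
    omega
  have hnbhd : ∀ y, y = a ∨ H.Adj a y := fun y => by
    induction hc.2 a y with
    | refl => exact .inl rfl
    | tail _ hyz ih =>
      rcases ih with rfl | hay
      · exact .inr hyz
      · exact .inl (huniq (adj_comm.mp hay) hyz).symm
  rcases hnbhd b with rfl | hab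
  · exact .inl rfl
  rcases hnbhd c with rfl | hac
  · exact .inr (.inl rfl)
  exact .inr (.inr (huniq hab hac))

theorem isHomImage_iff {G : Multigraph V} {H : Multigraph W} {φ : W → V} :
    IsHomImage G H φ ↔ Surjective φ ∧ H.edges.map (Sym2.map φ) = G.edges := by
  classical
  refine and_congr_right fun _ =>
    ⟨fun h => Multiset.ext.mpr fun e => ?_, fun h u v => by rw [h]⟩
  induction e using Sym2.ind with
  | _ u v => exact (h u v).symm

def addPendant (H : Multigraph W) (w : W) : Multigraph (W ⊕ Unit) :=
  ⟨s(.inl w, .inr ()) ::ₘ H.edges.map (Sym2.map .inl)⟩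

theorem Connected.addPendant {H : Multigraph W} (hc : H.Connected) (w : W) :
    (H.addPendant w).Connected := by
  have hw : (H.addPendant w).Adj (.inr ()) (.inl w) :=
    Multiset.mem_cons.mpr (.inl Sym2.eq_swap)
  refine connected_of_forall_reflTransGen (.inr ()) ?_
  rintro (x | ⟨⟩)
  · refine Relation.ReflTransGen.tail ?_ (adj_comm.mp hw)
    refine Relation.ReflTransGen.lift _ (fun y z (h : s(y, z) ∈ H.edges) => ?_) _ _ (hc.2 x w)
    exact Multiset.mem_cons_of_mem (Multiset.mem_map_of_mem (Sym2.map Sum.inl) h)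
  · exact .refl

theorem deg_addPendant_inl [DecidableEq W] (H : Multigraph W) (w x : W) :
    (H.addPendant w).deg (.inl x) = H.deg x + if x = w then 1 else 0 := by
  have hinj : Injective (Sym2.map (Sum.inl : W → W ⊕ Unit)) :=
    Sym2.map.injective Sum.inl_injective
  rw [deg_eq_countP_add_count, deg_eq_countP_add_count, addPendant]
  dsimp only
  rw [Multiset.countP_cons, Multiset.count_cons, Multiset.countP_map, ← Sym2.map_mk,
    Multiset.count_map_eq_count' _ _ hinj]
  simp [Sym2.mem_map, Multiset.countP_eq_card_filter]
  omega

theorem deg_addPendant_inr (H : Multigraph W) (w : W) (t : Unit) :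
    (H.addPendant w).deg (.inr t) = 1 := by
  classical
  rw [deg_eq_countP_add_count, addPendant]
  simp [Multiset.countP_map, Sym2.mem_map]
  rintro e - h
  simpa using congrArg (Sum.inr t ∈ ·) h

def walkEdges : List V → Multiset (Sym2 V)
  | a :: b :: l => s(a, b) ::ₘ walkEdges (b :: l)
  | _ => 0

@[simp]
theorem walkEdges_singleton (a : V) : walkEdges [a] = 0 := rfl

@[simp]
theorem walkEdges_cons_cons (a b : V) (l : List V) :
    walkEdges (a :: b :: l) = s(a, b) ::ₘ walkEdges (b :: l) := rfl

theorem card_walkEdges (a : V) (l : List V) : Multiset.card (walkEdges (a :: l)) = l.length := by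
  induction l generalizing a with
  | nil => rfl
  | cons b l ih => simp [ih]

theorem exists_walk_exhausting_start [DecidableEq V] {R : Multiset (Sym2 V)} (hR : R ≠ 0) :
    ∃ z l, l ≠ [] ∧ walkEdges (z :: l) ≤ R ∧
      ∀ e ∈ R - walkEdges (z :: l), z ∉ e := by
  by_contra! hext
  -- otherwise every walk in `R` extends at its start, and `R` would contain arbitrarily long walks
  have hlong : ∀ n, ∃ z l, l ≠ [] ∧ walkEdges (z :: l) ≤ R ∧ n ≤ l.length := by
    intro n
    induction n with
    | zero =>
      obtain ⟨e, he⟩ := Multiset.exists_mem_of_ne_zero hR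
      induction e using Sym2.ind with
      | _ a b => exact ⟨a, [b], by simp, by simpa using he, by simp⟩
    | succ n ih =>
      obtain ⟨z, l, hl, hle, hn⟩ := ih
      obtain ⟨e, he, hze⟩ := hext z l hl hle
      obtain ⟨c, rfl⟩ := Sym2.mem_iff_exists.mp hze
      refine ⟨c, z :: l, by simp, ?_, by simpa using hn⟩
      rw [walkEdges_cons_cons, Sym2.eq_swap, ← Multiset.singleton_add]
      exact (le_tsub_iff_right hle).mp (Multiset.singleton_le.mpr he)
  obtain ⟨z, l, -, hle, hn⟩ := hlong (Multiset.card R + 1)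
  have := Multiset.card_le_card hle
  rw [card_walkEdges] at this
  omega

/-- Presents `image` as the homomorphic image of the connected multigraph `graph` by `proj`. -/
structure Unfolding (V : Type) where
  W : Type
  [finite : Finite W]
  graph : Multigraph W
  proj : W → V
  connected : graph.Connected
  surjective : Surjective proj

attribute [instance] Unfolding.finite

namespace Unfolding

variable (C : Unfolding V)

def image : Multiset (Sym2 V) := C.graph.edges.map (Sym2.map C.proj)

def HasPreimageOfDegLE (m : ℕ) (v : V) : Prop := ∃ w, C.proj w = v ∧ C.graph.deg w ≤ m

theorem HasPreimageOfDegLE.mono {C : Unfolding V} {m m' : ℕ} {v : V}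
    (h : C.HasPreimageOfDegLE m v) (hm : m ≤ m') : C.HasPreimageOfDegLE m' v :=
  let ⟨w, hw, hdeg⟩ := h; ⟨w, hw, hdeg.trans hm⟩

end Unfolding

theorem isKTrail_iff {G : Multigraph V} {k : ℕ} :
    G.IsKTrail k ↔ ∃ C : Unfolding V, (∀ w, C.graph.deg w ≤ k) ∧ C.image = G.edges := by
  constructor
  · rintro ⟨W, _, H, φ, hc, hdeg, him⟩
    obtain ⟨hφ, hmap⟩ := isHomImage_iff.mp him
    exact ⟨⟨W, H, φ, hc, hφ⟩, hdeg, hmap⟩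
  · rintro ⟨C, hdeg, himage⟩
    exact ⟨C.W, C.finite, C.graph, C.proj, C.connected, hdeg,
      isHomImage_iff.mpr ⟨C.surjective, himage⟩⟩

namespace Unfolding

variable (C : Unfolding V)

def addPendant (w : C.W) (b : V) : Unfolding V where
  W := C.W ⊕ Unit
  graph := C.graph.addPendant w
  proj := Sum.elim C.proj fun _ => b
  connected := C.connected.addPendant w
  surjective v := let ⟨x, hx⟩ := C.surjective v; ⟨.inl x, hx⟩

variable {C}

theorem image_addPendant (w : C.W) (b : V) :
    (C.addPendant w b).image = s(C.proj w, b) ::ₘ C.image := by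
  simp [image, addPendant, Multigraph.addPendant, Multiset.map_map, Sym2.map_map, Function.comp_def]

@[simp]
theorem proj_addPendant_inl (w : C.W) (b : V) (x : C.W) :
    (C.addPendant w b).proj (.inl x) = C.proj x :=
  rfl

@[simp]
theorem proj_addPendant_inr (w : C.W) (b : V) (t : Unit) : (C.addPendant w b).proj (.inr t) = b :=
  rfl

theorem deg_addPendant_inl_self (w : C.W) (b : V) :
    (C.addPendant w b).graph.deg (.inl w) = C.graph.deg w + 1 := by
  classical
  exact (C.graph.deg_addPendant_inl w w).trans (by rw [if_pos rfl])

theorem deg_addPendant_inl_of_ne {w x : C.W} (b : V) (h : x ≠ w) :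
    (C.addPendant w b).graph.deg (.inl x) = C.graph.deg x := by
  classical
  exact (C.graph.deg_addPendant_inl w x).trans (by rw [if_neg h, add_zero])

theorem deg_addPendant_inr (w : C.W) (b : V) (t : Unit) :
    (C.addPendant w b).graph.deg (.inr t) = 1 :=
  C.graph.deg_addPendant_inr w t

theorem deg_addPendant_le {d : ℕ} (hd : 1 ≤ d) (hdeg : ∀ x, C.graph.deg x ≤ d) {w : C.W}
    (hw : C.graph.deg w < d) (b : V) (y : (C.addPendant w b).W) :
    (C.addPendant w b).graph.deg y ≤ d := by
  rcases y with x | t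
  · rcases eq_or_ne x w with rfl | h
    · rw [deg_addPendant_inl_self]; omega
    · rw [deg_addPendant_inl_of_ne b h]; exact hdeg x
  · rw [deg_addPendant_inr]
    exact hd

theorem exists_image_eq_add_walkEdges {d : ℕ} (hd : 2 ≤ d) (l : List V) (C : Unfolding V)
    (hdeg : ∀ x, C.graph.deg x ≤ d) (w : C.W) (hw : C.graph.deg w < d) :
    ∃ C' : Unfolding V, C'.image = C.image + walkEdges (C.proj w :: l) ∧
      (∀ y, C'.graph.deg y ≤ d) ∧
      (∀ x, x ≠ w → C'.HasPreimageOfDegLE (C.graph.deg x) (C.proj x)) ∧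
      C'.HasPreimageOfDegLE (C.graph.deg w + 1) (C.proj w) ∧
      ∀ v ∈ l, C'.HasPreimageOfDegLE 2 v := by
  induction l generalizing C w with
  | nil =>
    exact ⟨C, by simp, hdeg, fun x _ => ⟨x, rfl, le_rfl⟩, ⟨w, rfl, by omega⟩, by simp⟩
  | cons b l ih =>
    obtain ⟨C', himage, hdeg', hold, hend, hnew⟩ :=
      ih (C.addPendant w b) (deg_addPendant_le (by omega) hdeg hw b) (.inr ())
        (by rw [deg_addPendant_inr]; omega)
    refine ⟨C', ?_, hdeg', fun x hx => ?_, ?_, ?_⟩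
    · rw [himage, image_addPendant, walkEdges_cons_cons, Multiset.cons_add, Multiset.add_cons]
      rfl
    · simpa [deg_addPendant_inl_of_ne b hx] using hold (.inl x) Sum.inl_ne_inr
    · simpa [deg_addPendant_inl_self] using hold (.inl w) Sum.inl_ne_inr
    · intro v hv
      rcases List.mem_cons.mp hv with rfl | hv
      · simpa [deg_addPendant_inr] using hend
      · exact hnew v hv

theorem isKTrail_succ_image_add {j : ℕ} (hj : 2 ≤ j) (R : Multiset (Sym2 V)) (C : Unfolding V)
    (hdeg : ∀ x, C.graph.deg x ≤ j + 1)
    (hR : ∀ e ∈ R, ∀ u ∈ e, C.HasPreimageOfDegLE j u) :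
    IsKTrail ⟨C.image + R⟩ (j + 1) := by
  classical
  induction hn : Multiset.card R using Nat.strong_induction_on generalizing R C with
  | _ n ih =>
  rcases eq_or_ne R 0 with rfl | hR0
  · exact isKTrail_iff.mpr ⟨C, hdeg, (add_zero _).symm⟩
  obtain ⟨z, l, hl, hle, hz⟩ := exists_walk_exhausting_start hR0
  obtain ⟨c, l, rfl⟩ := List.exists_cons_of_ne_nil hl
  obtain ⟨w, rfl, hw⟩ := hR _ (Multiset.mem_of_le hle (by simp)) z (Sym2.mem_mk_left z c)
  obtain ⟨C', himage, hdeg', hold, -, hnew⟩ :=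
    exists_image_eq_add_walkEdges (by omega) _ C hdeg w (by omega)
  have hcard : Multiset.card (R - walkEdges (C.proj w :: c :: l)) < n := by
    rw [Multiset.card_sub hle, card_walkEdges, ← hn]
    have := Multiset.card_le_card hle
    rw [card_walkEdges] at this
    simp only [List.length_cons] at this ⊢
    omega
  have := ih _ hcard _ C' hdeg' ?_ rfl
  · rwa [himage, add_assoc, add_tsub_cancel_of_le hle] at this
  intro e he u hu
  by_cases hul : u ∈ c :: l
  · exact (hnew u hul).mono hj
  obtain ⟨x, rfl, hx⟩ := hR e (Multiset.mem_of_le tsub_le_self he) u hu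
  have hxw : x ≠ w := by rintro rfl; exact hz e he hu
  exact (hold x hxw).mono hx

theorem isKTrail_two_image_add (hV : ∀ a b c : V, a = b ∨ a = c ∨ b = c)
    (R : Multiset (Sym2 V)) (C : Unfolding V) (hdeg : ∀ x, C.graph.deg x ≤ 2)
    (hR : ∀ e ∈ R, ∃ u ∈ e, C.HasPreimageOfDegLE 1 u) :
    IsKTrail ⟨C.image + R⟩ 2 := by
  induction hn : Multiset.card R generalizing R C with
  | zero =>
    rw [Multiset.card_eq_zero.mp hn]
    exact isKTrail_iff.mpr ⟨C, hdeg, (add_zero _).symm⟩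
  | succ n ih =>
  have step : ∀ (w : C.W) (b : V) (R' : Multiset (Sym2 V)), R = s(C.proj w, b) ::ₘ R' →
      C.graph.deg w ≤ 1 →
      (∀ e ∈ R', ∃ u ∈ e, (C.addPendant w b).HasPreimageOfDegLE 1 u) →
      IsKTrail ⟨C.image + R⟩ 2 := by
    rintro w b R' rfl hw hR'
    have := ih R' (C.addPendant w b) (deg_addPendant_le one_le_two hdeg (by omega) b) hR'
      (by simpa using hn)
    rwa [image_addPendant, Multiset.cons_add, ← Multiset.add_cons] at this
  by_cases hloop : ∃ u, s(u, u) ∈ R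
  · obtain ⟨u, hu⟩ := hloop
    obtain ⟨R', rfl⟩ := Multiset.exists_cons_of_mem hu
    obtain ⟨_, hu', w, rfl, hw⟩ := hR _ (Multiset.mem_cons_self _ _)
    obtain rfl : C.proj w = u := by simpa using hu'
    refine step w _ R' rfl hw fun e he => ?_
    obtain ⟨v, hv, x, rfl, hx⟩ := hR e (Multiset.mem_cons_of_mem he)
    refine ⟨C.proj x, hv, ?_⟩
    rcases eq_or_ne x w with rfl | hxw
    · exact ⟨.inr (), rfl, by rw [deg_addPendant_inr]⟩
    · exact ⟨.inl x, rfl, by rwa [deg_addPendant_inl_of_ne _ hxw]⟩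
  · obtain ⟨e, he⟩ := Multiset.card_pos_iff_exists_mem.mp (by omega : 0 < Multiset.card R)
    obtain ⟨R', rfl⟩ := Multiset.exists_cons_of_mem he
    obtain ⟨u, hu, w, rfl, hw⟩ := hR e (Multiset.mem_cons_self _ _)
    obtain ⟨b, rfl⟩ := Sym2.mem_iff_exists.mp hu
    refine step w b R' rfl hw fun e he => ⟨b, ?_, .inr (), rfl, by rw [deg_addPendant_inr]⟩
    -- `V` has at most two points, so every edge of `R` that is not a loop contains `b`
    induction e using Sym2.ind with
    | _ x y =>
      have hxy : x ≠ y := by rintro rfl; exact hloop ⟨x, Multiset.mem_cons_of_mem he⟩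
      rcases hV x y b with h | rfl | rfl
      · exact absurd h hxy
      · exact Sym2.mem_mk_left _ _
      · exact Sym2.mem_mk_right _ _

end Unfolding

theorem isKTrail_succ_of_containsKTrail {G : Multigraph V} {j : ℕ} (hj : 1 ≤ j)
    (h : G.ContainsKTrail j) : G.IsKTrail (j + 1) := by
  classical
  obtain ⟨U, hU, hUj⟩ := h
  obtain ⟨C, hdeg, rfl⟩ := isKTrail_iff.mp hUj
  have hG : G = ⟨C.image + (G.edges - C.image)⟩ := by rw [add_tsub_cancel_of_le hU]
  have hspare (v : V) : C.HasPreimageOfDegLE j v :=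
    let ⟨x, hx⟩ := C.surjective v; ⟨x, hx, hdeg x⟩
  rw [hG]
  obtain rfl | hj2 : j = 1 ∨ 2 ≤ j := by omega
  · refine C.isKTrail_two_image_add (fun a b c => ?_) _ (fun x => (hdeg x).trans one_le_two)
      fun e _ => ?_
    · obtain ⟨x, rfl⟩ := C.surjective a
      obtain ⟨y, rfl⟩ := C.surjective b
      obtain ⟨z, rfl⟩ := C.surjective c
      rcases eq_or_eq_or_eq_of_deg_le_one C.connected hdeg x y z with h | h | h <;> simp [h]
    · induction e using Sym2.ind with
      | _ u _ => exact ⟨u, Sym2.mem_mk_left _ _, hspare u⟩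
  · exact C.isKTrail_succ_image_add hj2 _ (fun x => (hdeg x).trans j.le_succ)
      fun _ _ u _ => hspare u

end Multigraph

theorem contains_min_kTrail_near_general {V : Type}
    (G : Multigraph V) (kstar : ℕ) (hk1 : 1 ≤ kstar)
    (hks : IsKTrail G kstar)
    (hmin : ∀ k : ℕ, 1 ≤ k → IsKTrail G k → kstar ≤ k) :
    ∃ k : ℕ, 1 ≤ k ∧ ContainsKTrail G k ∧
      (∀ k' : ℕ, 1 ≤ k' → ContainsKTrail G k' → k ≤ k') ∧
      (k = kstar ∨ k + 1 = kstar) := by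
  classical
  have hself : ContainsKTrail G kstar := ⟨G.edges, le_rfl, hks⟩
  have hex : ∃ k, 1 ≤ k ∧ ContainsKTrail G k := ⟨kstar, hk1, hself⟩
  obtain ⟨hk, hGk⟩ := Nat.find_spec hex
  have hle : Nat.find hex ≤ kstar := Nat.find_min' hex ⟨hk1, hself⟩
  have hge : kstar ≤ Nat.find hex + 1 :=
    hmin _ (by omega) (isKTrail_succ_of_containsKTrail hk hGk)
  exact ⟨Nat.find hex, hk, hGk, fun k' hk' h => Nat.find_min' hex ⟨hk', h⟩, by omega⟩

/-- If `kstar` is the smallest positive integer such that `G` is a `kstar`-trail, then the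
smallest positive integer `k` for which `G` contains a `k`-trail is `kstar` or `kstar - 1`. -/
theorem contains_min_kTrail_near {V : Type} [Finite V]
    (hV : 2 ≤ Nat.card V)
    (G : Multigraph V) (kstar : ℕ) (hk1 : 1 ≤ kstar)
    (hks : IsKTrail G kstar)
    (hmin : ∀ k : ℕ, 1 ≤ k → IsKTrail G k → kstar ≤ k) :
    ∃ k : ℕ, 1 ≤ k ∧ ContainsKTrail G k ∧
      (∀ k' : ℕ, 1 ≤ k' → ContainsKTrail G k' → k ≤ k') ∧
      (k = kstar ∨ k + 1 = kstar) :=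
  contains_min_kTrail_near_general G kstar hk1 hks hmin
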